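/- arXiv:2405.04347 — 2 statements merged into one kernel-verified Lean document; each statement's English description precedes it below -/
import Mathlib

section
/- Let b : ℝ² → ℝ² be twice continuously differentiable and let u : ℝ × ℝ² → ℝ² be twice continuously differentiable and satisfy the two-dimensional induction equation ∂t u + ∇⊥(b·u⊥) + b (∇·u) = 0 at every (t,x). Then the divergence D(t,x) := (∇·u)(t,x) satisfies the conservative transport equation ∂t D + ∇·(D b) = 0 at every (t,x). -/
open Real

section Toolbox

variable {f : ℝ → ℝ → ℝ}

private lemma pd1_eq {x y : ℝ} (hf : DifferentiableAt ℝ (fun p : ℝ × ℝ => f p.1 p.2) (x, y)) :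
    deriv (fun a => f a y) x = fderiv ℝ (fun p : ℝ × ℝ => f p.1 p.2) (x, y) ((1 : ℝ), (0 : ℝ)) := by
  have hι : HasFDerivAt (fun a : ℝ => (a, y)) ((ContinuousLinearMap.id ℝ ℝ).prod 0) x :=
    (hasFDerivAt_id x).prodMk (hasFDerivAt_const y x)
  have h := (hf.hasFDerivAt.comp x hι).hasDerivAt.deriv
  simpa [Function.comp_def] using h

private lemma pd2_eq {x y : ℝ} (hf : DifferentiableAt ℝ (fun p : ℝ × ℝ => f p.1 p.2) (x, y)) :
    deriv (fun b => f x b) y = fderiv ℝ (fun p : ℝ × ℝ => f p.1 p.2) (x, y) ((0 : ℝ), (1 : ℝ)) := by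
  have hι : HasFDerivAt (fun b : ℝ => (x, b)) ((0 : ℝ →L[ℝ] ℝ).prod (ContinuousLinearMap.id ℝ ℝ)) y :=
    (hasFDerivAt_const x y).prodMk (hasFDerivAt_id y)
  have h := (hf.hasFDerivAt.comp y hι).hasDerivAt.deriv
  simpa [Function.comp_def] using h

private lemma apply_c1 (hf : ContDiff ℝ 2 (fun p : ℝ × ℝ => f p.1 p.2)) (v : ℝ × ℝ) :
    ContDiff ℝ 1 (fun p : ℝ × ℝ => fderiv ℝ (fun q : ℝ × ℝ => f q.1 q.2) p v) := by
  have h1 : ContDiff ℝ 1 (fderiv ℝ (fun q : ℝ × ℝ => f q.1 q.2)) :=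
    hf.fderiv_right (by norm_num)
  exact (ContinuousLinearMap.apply ℝ ℝ v).contDiff.comp h1

private lemma fd1 (hf : ContDiff ℝ 2 (fun p : ℝ × ℝ => f p.1 p.2)) (v : ℝ × ℝ) (x y : ℝ) :
    deriv (fun a => fderiv ℝ (fun q : ℝ × ℝ => f q.1 q.2) (a, y) v) x
      = fderiv ℝ (fderiv ℝ (fun q : ℝ × ℝ => f q.1 q.2)) (x, y) ((1 : ℝ), (0 : ℝ)) v := by
  set F := fun q : ℝ × ℝ => f q.1 q.2 with hF
  have h1 : ContDiff ℝ 1 (fderiv ℝ F) := hf.fderiv_right (by norm_num)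
  have hD : DifferentiableAt ℝ (fderiv ℝ F) (x, y) := (h1.differentiable one_ne_zero) _
  have hg : HasFDerivAt (fun p : ℝ × ℝ => fderiv ℝ F p v)
      ((ContinuousLinearMap.apply ℝ ℝ v).comp (fderiv ℝ (fderiv ℝ F) (x, y))) (x, y) :=
    ((ContinuousLinearMap.apply ℝ ℝ v).hasFDerivAt).comp _ hD.hasFDerivAt
  have hι : HasFDerivAt (fun a : ℝ => (a, y)) ((ContinuousLinearMap.id ℝ ℝ).prod 0) x :=
    (hasFDerivAt_id x).prodMk (hasFDerivAt_const y x)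
  have h := ((hg.comp x hι).hasDerivAt).deriv
  simpa [Function.comp_def] using h

private lemma fd2 (hf : ContDiff ℝ 2 (fun p : ℝ × ℝ => f p.1 p.2)) (v : ℝ × ℝ) (x y : ℝ) :
    deriv (fun b => fderiv ℝ (fun q : ℝ × ℝ => f q.1 q.2) (x, b) v) y
      = fderiv ℝ (fderiv ℝ (fun q : ℝ × ℝ => f q.1 q.2)) (x, y) ((0 : ℝ), (1 : ℝ)) v := by
  set F := fun q : ℝ × ℝ => f q.1 q.2 with hF
  have h1 : ContDiff ℝ 1 (fderiv ℝ F) := hf.fderiv_right (by norm_num)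
  have hD : DifferentiableAt ℝ (fderiv ℝ F) (x, y) := (h1.differentiable one_ne_zero) _
  have hg : HasFDerivAt (fun p : ℝ × ℝ => fderiv ℝ F p v)
      ((ContinuousLinearMap.apply ℝ ℝ v).comp (fderiv ℝ (fderiv ℝ F) (x, y))) (x, y) :=
    ((ContinuousLinearMap.apply ℝ ℝ v).hasFDerivAt).comp _ hD.hasFDerivAt
  have hι : HasFDerivAt (fun b : ℝ => (x, b)) ((0 : ℝ →L[ℝ] ℝ).prod (ContinuousLinearMap.id ℝ ℝ)) y :=
    (hasFDerivAt_const x y).prodMk (hasFDerivAt_id y)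
  have h := ((hg.comp y hι).hasDerivAt).deriv
  simpa [Function.comp_def] using h

/-- Clairaut's theorem for curried functions on ℝ². -/
private lemma clairaut (hf : ContDiff ℝ 2 (fun p : ℝ × ℝ => f p.1 p.2)) (x y : ℝ) :
    deriv (fun a => deriv (fun b => f a b) y) x
      = deriv (fun b => deriv (fun a => f a b) x) y := by
  set F := fun q : ℝ × ℝ => f q.1 q.2 with hF
  have hd : Differentiable ℝ F := hf.differentiable (by norm_num)
  have e1 : (fun a => deriv (fun b => f a b) y) = fun a => fderiv ℝ F (a, y) ((0:ℝ), (1:ℝ)) :=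
    funext fun a => pd2_eq (hd _)
  have e2 : (fun b => deriv (fun a => f a b) x) = fun b => fderiv ℝ F (x, b) ((1:ℝ), (0:ℝ)) :=
    funext fun b => pd1_eq (hd _)
  rw [e1, e2, fd1 hf _ x y, fd2 hf _ x y]
  have h1 : ContDiff ℝ 1 (fderiv ℝ F) := hf.fderiv_right (by norm_num)
  exact second_derivative_symmetric (fun p => (hd p).hasFDerivAt)
    ((h1.differentiable one_ne_zero _).hasFDerivAt) _ _

/-- varying 1st coordinate, partial derivative w.r.t. 2nd. -/
private lemma diff_pd21 (hf : ContDiff ℝ 2 (fun p : ℝ × ℝ => f p.1 p.2)) (c : ℝ) :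
    Differentiable ℝ (fun s => deriv (fun b => f s b) c) := by
  set F := fun q : ℝ × ℝ => f q.1 q.2 with hF
  have hd : Differentiable ℝ F := hf.differentiable (by norm_num)
  have e : (fun s => deriv (fun b => f s b) c) = fun s => fderiv ℝ F (s, c) ((0:ℝ), (1:ℝ)) :=
    funext fun s => pd2_eq (hd _)
  rw [e]
  exact ((apply_c1 hf _).differentiable one_ne_zero).comp
    ((differentiable_id.prodMk (differentiable_const c)))

/-- varying 2nd coordinate, partial derivative w.r.t. 1st. -/
private lemma diff_pd12 (hf : ContDiff ℝ 2 (fun p : ℝ × ℝ => f p.1 p.2)) (c : ℝ) :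
    Differentiable ℝ (fun s => deriv (fun a => f a s) c) := by
  set F := fun q : ℝ × ℝ => f q.1 q.2 with hF
  have hd : Differentiable ℝ F := hf.differentiable (by norm_num)
  have e : (fun s => deriv (fun a => f a s) c) = fun s => fderiv ℝ F (c, s) ((1:ℝ), (0:ℝ)) :=
    funext fun s => pd1_eq (hd _)
  rw [e]
  exact ((apply_c1 hf _).differentiable one_ne_zero).comp
    ((differentiable_const c).prodMk differentiable_id)

/-- varying 1st coordinate, partial derivative w.r.t. 1st. -/
private lemma diff_pd11 (hf : ContDiff ℝ 2 (fun p : ℝ × ℝ => f p.1 p.2)) (c : ℝ) :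
    Differentiable ℝ (fun s => deriv (fun a => f a c) s) := by
  set F := fun q : ℝ × ℝ => f q.1 q.2 with hF
  have hd : Differentiable ℝ F := hf.differentiable (by norm_num)
  have e : (fun s => deriv (fun a => f a c) s) = fun s => fderiv ℝ F (s, c) ((1:ℝ), (0:ℝ)) :=
    funext fun s => pd1_eq (hd _)
  rw [e]
  exact ((apply_c1 hf _).differentiable one_ne_zero).comp
    ((differentiable_id.prodMk (differentiable_const c)))

/-- varying 2nd coordinate, partial derivative w.r.t. 2nd. -/
private lemma diff_pd22 (hf : ContDiff ℝ 2 (fun p : ℝ × ℝ => f p.1 p.2)) (c : ℝ) :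
    Differentiable ℝ (fun s => deriv (fun b => f c b) s) := by
  set F := fun q : ℝ × ℝ => f q.1 q.2 with hF
  have hd : Differentiable ℝ F := hf.differentiable (by norm_num)
  have e : (fun s => deriv (fun b => f c b) s) = fun s => fderiv ℝ F (c, s) ((0:ℝ), (1:ℝ)) :=
    funext fun s => pd2_eq (hd _)
  rw [e]
  exact ((apply_c1 hf _).differentiable one_ne_zero).comp
    ((differentiable_const c).prodMk differentiable_id)

end Toolbox

/-- If `u` solves the two-dimensional induction equation
`∂ₜu + ∇⊥(b·u⊥) + b(∇·u) = 0`, then `D := ∇·u` satisfies the conservative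
transport equation `∂ₜD + ∇·(D b) = 0`. -/
theorem induction_divergence_transport
    (b1 b2 : ℝ → ℝ → ℝ)
    (u1 u2 : ℝ → ℝ → ℝ → ℝ)
    (hb1 : ContDiff ℝ 2 (fun p : ℝ × ℝ => b1 p.1 p.2))
    (hb2 : ContDiff ℝ 2 (fun p : ℝ × ℝ => b2 p.1 p.2))
    (hu1 : ContDiff ℝ 2 (fun p : ℝ × ℝ × ℝ => u1 p.1 p.2.1 p.2.2))
    (hu2 : ContDiff ℝ 2 (fun p : ℝ × ℝ × ℝ => u2 p.1 p.2.1 p.2.2))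
    (hind1 : ∀ t x y : ℝ,
      deriv (fun s => u1 s x y) t
        + (- deriv (fun b => b2 x b * u1 t x b - b1 x b * u2 t x b) y)
        + b1 x y * (deriv (fun a => u1 t a y) x + deriv (fun b => u2 t x b) y) = 0)
    (hind2 : ∀ t x y : ℝ,
      deriv (fun s => u2 s x y) t
        + deriv (fun a => b2 a y * u1 t a y - b1 a y * u2 t a y) x
        + b2 x y * (deriv (fun a => u1 t a y) x + deriv (fun b => u2 t x b) y) = 0) :
    ∀ t x y : ℝ,
      deriv (fun s => deriv (fun a => u1 s a y) x + deriv (fun b => u2 s x b) y) t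
        + deriv (fun a =>
            (deriv (fun a' => u1 t a' y) a + deriv (fun b => u2 t a b) y) * b1 a y) x
        + deriv (fun b =>
            (deriv (fun a => u1 t a b) x + deriv (fun b' => u2 t x b') b) * b2 x b) y = 0 := by
  intro t x y
  -- slice regularity
  have hF1 : ContDiff ℝ 2 (fun p : ℝ × ℝ => u1 p.1 p.2 y) :=
    hu1.comp (contDiff_fst.prodMk (contDiff_snd.prodMk contDiff_const))
  have hF2 : ContDiff ℝ 2 (fun p : ℝ × ℝ => u2 p.1 x p.2) :=
    hu2.comp (contDiff_fst.prodMk (contDiff_const.prodMk contDiff_snd))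
  have hG1 : ContDiff ℝ 2 (fun p : ℝ × ℝ => u1 t p.1 p.2) :=
    hu1.comp (contDiff_const.prodMk (contDiff_fst.prodMk contDiff_snd))
  have hG2 : ContDiff ℝ 2 (fun p : ℝ × ℝ => u2 t p.1 p.2) :=
    hu2.comp (contDiff_const.prodMk (contDiff_fst.prodMk contDiff_snd))
  have hEF : ContDiff ℝ 2
      (fun p : ℝ × ℝ => b2 p.1 p.2 * u1 t p.1 p.2 - b1 p.1 p.2 * u2 t p.1 p.2) :=
    (hb2.mul hG1).sub (hb1.mul hG2)
  have hb1slice : Differentiable ℝ (fun a => b1 a y) :=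
    (hb1.differentiable (by norm_num)).comp (differentiable_id.prodMk (differentiable_const y))
  have hb2slice : Differentiable ℝ (fun b => b2 x b) :=
    (hb2.differentiable (by norm_num)).comp ((differentiable_const x).prodMk differentiable_id)
  have hDdiff : Differentiable ℝ
      (fun a => deriv (fun a' => u1 t a' y) a + deriv (fun b => u2 t a b) y) :=
    (diff_pd11 (f := fun a b => u1 t a b) hG1 y).add
      (diff_pd21 (f := fun a b => u2 t a b) hG2 y)
  have hD'diff : Differentiable ℝ
      (fun b => deriv (fun a => u1 t a b) x + deriv (fun b' => u2 t x b') b) :=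
    (diff_pd12 (f := fun a b => u1 t a b) hG1 x).add
      (diff_pd22 (f := fun a b => u2 t a b) hG2 x)
  have hP : DifferentiableAt ℝ (fun s => deriv (fun a => u1 s a y) x) t :=
    (diff_pd21 (f := fun s a => u1 s a y) hF1 x) t
  have hQ : DifferentiableAt ℝ (fun s => deriv (fun b => u2 s x b) y) t :=
    (diff_pd21 (f := fun s b => u2 s x b) hF2 y) t
  have step1 : deriv (fun s => deriv (fun a => u1 s a y) x + deriv (fun b => u2 s x b) y) t
      = deriv (fun s => deriv (fun a => u1 s a y) x) t
        + deriv (fun s => deriv (fun b => u2 s x b) y) t :=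
    deriv_add hP hQ
  have step2 : deriv (fun s => deriv (fun a => u1 s a y) x) t
      = deriv (fun a => deriv (fun s => u1 s a y) t) x :=
    clairaut (f := fun s a => u1 s a y) hF1 t x
  have step2' : deriv (fun s => deriv (fun b => u2 s x b) y) t
      = deriv (fun b => deriv (fun s => u2 s x b) t) y :=
    clairaut (f := fun s b => u2 s x b) hF2 t y
  have e1 : (fun a => deriv (fun s => u1 s a y) t)
      = fun a => deriv (fun b => b2 a b * u1 t a b - b1 a b * u2 t a b) y
          - b1 a y * (deriv (fun a' => u1 t a' y) a + deriv (fun b => u2 t a b) y) := by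
    funext a
    have h := hind1 t a y
    linarith
  have e2 : (fun b => deriv (fun s => u2 s x b) t)
      = fun b => -(deriv (fun a => b2 a b * u1 t a b - b1 a b * u2 t a b) x)
          - b2 x b * (deriv (fun a => u1 t a b) x + deriv (fun b' => u2 t x b') b) := by
    funext b
    have h := hind2 t x b
    linarith
  have hA : Differentiable ℝ
      (fun a => deriv (fun b => b2 a b * u1 t a b - b1 a b * u2 t a b) y) :=
    diff_pd21 (f := fun a b => b2 a b * u1 t a b - b1 a b * u2 t a b) hEF y
  have hB : Differentiable ℝ
      (fun b => deriv (fun a => b2 a b * u1 t a b - b1 a b * u2 t a b) x) :=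
    diff_pd12 (f := fun a b => b2 a b * u1 t a b - b1 a b * u2 t a b) hEF x
  have step3 : deriv (fun a => deriv (fun s => u1 s a y) t) x
      = deriv (fun a => deriv (fun b => b2 a b * u1 t a b - b1 a b * u2 t a b) y) x
        - deriv (fun a =>
            b1 a y * (deriv (fun a' => u1 t a' y) a + deriv (fun b => u2 t a b) y)) x := by
    rw [e1]
    exact deriv_sub (hA x) ((hb1slice.mul hDdiff) x)
  have step3' : deriv (fun b => deriv (fun s => u2 s x b) t) y
      = -(deriv (fun b => deriv (fun a => b2 a b * u1 t a b - b1 a b * u2 t a b) x) y)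
        - deriv (fun b =>
            b2 x b * (deriv (fun a => u1 t a b) x + deriv (fun b' => u2 t x b') b)) y := by
    rw [e2, deriv_fun_sub (f := fun b => -(deriv (fun a => b2 a b * u1 t a b - b1 a b * u2 t a b) x)) (g := fun b => b2 x b * (deriv (fun a => u1 t a b) x + deriv (fun b' => u2 t x b') b)) ((hB.neg) y) ((hb2slice.mul hD'diff) y), deriv.fun_neg]
  have step4 : deriv (fun a => deriv (fun b => b2 a b * u1 t a b - b1 a b * u2 t a b) y) x
      = deriv (fun b => deriv (fun a => b2 a b * u1 t a b - b1 a b * u2 t a b) x) y :=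
    clairaut (f := fun a b => b2 a b * u1 t a b - b1 a b * u2 t a b) hEF x y
  have m1 : deriv (fun a =>
        (deriv (fun a' => u1 t a' y) a + deriv (fun b => u2 t a b) y) * b1 a y) x
      = deriv (fun a =>
        b1 a y * (deriv (fun a' => u1 t a' y) a + deriv (fun b => u2 t a b) y)) x := by
    congr 1
    funext a
    ring
  have m2 : deriv (fun b =>
        (deriv (fun a => u1 t a b) x + deriv (fun b' => u2 t x b') b) * b2 x b) y
      = deriv (fun b =>
        b2 x b * (deriv (fun a => u1 t a b) x + deriv (fun b' => u2 t x b') b)) y := by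
    congr 1
    funext b
    ring
  rw [step1, step2, step2', step3, step3', step4, m1, m2]
  ring
end

section
/- Let b : ℝ² → ℝ² be continuously differentiable and let f : ℝ × ℝ² → ℝ be twice continuously differentiable and satisfy the transport equation ∂t f(t,x) = b(x) · ∇ₓ f(t,x) for all (t,x). Then the vector field u(t,x) := ∇⊥ₓ f(t,x) = (−∂y f, ∂x f)(t,x) is an exact solution of the two-dimensional induction equation ∂t u + ∇⊥(b·u⊥) + b (∇·u) = 0, and moreover u is divergence free for all time: (∇·u)(t,x) = 0 for all (t,x). -/
open Real

private lemma pdt {G : ℝ × ℝ × ℝ → ℝ} (hG : Differentiable ℝ G) (t x y : ℝ) :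
    HasDerivAt (fun s => G (s, x, y)) (fderiv ℝ G (t, x, y) (1, 0, 0)) t := by
  have h := (hG (t, x, y)).hasFDerivAt.comp_hasDerivAt t
    ((hasDerivAt_id t).prodMk (hasDerivAt_const t ((x : ℝ), (y : ℝ))))
  exact h

private lemma pdx {G : ℝ × ℝ × ℝ → ℝ} (hG : Differentiable ℝ G) (t x y : ℝ) :
    HasDerivAt (fun a => G (t, a, y)) (fderiv ℝ G (t, x, y) (0, 1, 0)) x := by
  have h := (hG (t, x, y)).hasFDerivAt.comp_hasDerivAt x
    ((hasDerivAt_const x (t : ℝ)).prodMk ((hasDerivAt_id x).prodMk (hasDerivAt_const x (y : ℝ))))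
  exact h

private lemma pdy {G : ℝ × ℝ × ℝ → ℝ} (hG : Differentiable ℝ G) (t x y : ℝ) :
    HasDerivAt (fun b => G (t, x, b)) (fderiv ℝ G (t, x, y) (0, 0, 1)) y := by
  have h := (hG (t, x, y)).hasFDerivAt.comp_hasDerivAt y
    ((hasDerivAt_const y (t : ℝ)).prodMk ((hasDerivAt_const y (x : ℝ)).prodMk (hasDerivAt_id y)))
  exact h

private lemma fderiv_fderiv_apply {F : ℝ × ℝ × ℝ → ℝ} (hF : ContDiff ℝ 2 F)
    (p v w : ℝ × ℝ × ℝ) :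
    fderiv ℝ (fun q => fderiv ℝ F q v) p w = fderiv ℝ (fderiv ℝ F) p w v := by
  have h1 : ContDiff ℝ 1 (fderiv ℝ F) := hF.fderiv_right (by norm_num)
  have hsnd : HasFDerivAt (fderiv ℝ F) (fderiv ℝ (fderiv ℝ F) p) p :=
    ((h1.differentiable one_ne_zero) p).hasFDerivAt
  have h := ((ContinuousLinearMap.apply ℝ ℝ v).hasFDerivAt.comp p hsnd)
  have h2 : fderiv ℝ (fun q => fderiv ℝ F q v) p =
      (ContinuousLinearMap.apply ℝ ℝ v).comp (fderiv ℝ (fderiv ℝ F) p) := by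
    exact (h : HasFDerivAt (fun q => fderiv ℝ F q v) _ p).fderiv
  rw [h2]; rfl

private lemma key {F : ℝ × ℝ × ℝ → ℝ} (hF : ContDiff ℝ 2 F) (p v w : ℝ × ℝ × ℝ) :
    fderiv ℝ (fun q => fderiv ℝ F q v) p w = fderiv ℝ (fun q => fderiv ℝ F q w) p v := by
  have h1 : ContDiff ℝ 1 (fderiv ℝ F) := hF.fderiv_right (by norm_num)
  have hsnd : HasFDerivAt (fderiv ℝ F) (fderiv ℝ (fderiv ℝ F) p) p :=
    ((h1.differentiable one_ne_zero) p).hasFDerivAt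
  have hsymm := second_derivative_symmetric
    (fun y => ((hF.differentiable (by norm_num)) y).hasFDerivAt) hsnd w v
  rw [fderiv_fderiv_apply hF, fderiv_fderiv_apply hF, hsymm]

/-- If `f` solves the transport equation `∂ₜf = b·∇f`, then `u := ∇⊥f`
solves the two-dimensional induction equation `∂ₜu + ∇⊥(b·u⊥) + b(∇·u) = 0`
and is divergence free for all time. -/
theorem perp_gradient_solves_induction
    (b1 b2 : ℝ → ℝ → ℝ)
    (f : ℝ → ℝ → ℝ → ℝ)
    (u1 u2 : ℝ → ℝ → ℝ → ℝ)
    (hb1 : ContDiff ℝ 1 (fun p : ℝ × ℝ => b1 p.1 p.2))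
    (hb2 : ContDiff ℝ 1 (fun p : ℝ × ℝ => b2 p.1 p.2))
    (hf : ContDiff ℝ 2 (fun p : ℝ × ℝ × ℝ => f p.1 p.2.1 p.2.2))
    (htransport : ∀ t x y : ℝ,
      deriv (fun s => f s x y) t
        = b1 x y * deriv (fun a => f t a y) x + b2 x y * deriv (fun b => f t x b) y)
    (hu1 : ∀ t x y : ℝ, u1 t x y = - deriv (fun b => f t x b) y)
    (hu2 : ∀ t x y : ℝ, u2 t x y = deriv (fun a => f t a y) x) :
    (∀ t x y : ℝ,
      deriv (fun s => u1 s x y) t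
        + (- deriv (fun b => b2 x b * u1 t x b - b1 x b * u2 t x b) y)
        + b1 x y * (deriv (fun a => u1 t a y) x + deriv (fun b => u2 t x b) y) = 0)
    ∧
    (∀ t x y : ℝ,
      deriv (fun s => u2 s x y) t
        + deriv (fun a => b2 a y * u1 t a y - b1 a y * u2 t a y) x
        + b2 x y * (deriv (fun a => u1 t a y) x + deriv (fun b => u2 t x b) y) = 0)
    ∧
    (∀ t x y : ℝ,
      deriv (fun a => u1 t a y) x + deriv (fun b => u2 t x b) y = 0) := by
  set F : ℝ × ℝ × ℝ → ℝ := fun p => f p.1 p.2.1 p.2.2 with hFdef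
  have hFd : Differentiable ℝ F := hf.differentiable (by norm_num)
  have hG : ∀ v : ℝ × ℝ × ℝ, Differentiable ℝ (fun q => fderiv ℝ F q v) := fun v =>
    (((hf.fderiv_right (m := 1) (by norm_num)).clm_apply contDiff_const).differentiable one_ne_zero)
  -- expressions of first partial derivatives
  have hft : ∀ t x y : ℝ, deriv (fun s => f s x y) t = fderiv ℝ F (t, x, y) (1, 0, 0) :=
    fun t x y => (pdt hFd t x y).deriv
  have hfx : ∀ t x y : ℝ, deriv (fun a => f t a y) x = fderiv ℝ F (t, x, y) (0, 1, 0) :=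
    fun t x y => (pdx hFd t x y).deriv
  have hfy : ∀ t x y : ℝ, deriv (fun b => f t x b) y = fderiv ℝ F (t, x, y) (0, 0, 1) :=
    fun t x y => (pdy hFd t x y).deriv
  -- u in terms of fderiv
  have hU1 : ∀ t x y : ℝ, u1 t x y = -(fderiv ℝ F (t, x, y) (0, 0, 1)) := by
    intro t x y; rw [hu1, hfy]
  have hU2 : ∀ t x y : ℝ, u2 t x y = fderiv ℝ F (t, x, y) (0, 1, 0) := by
    intro t x y; rw [hu2, hfx]
  -- divergence free
  have hdiv : ∀ t x y : ℝ,
      deriv (fun a => u1 t a y) x + deriv (fun b => u2 t x b) y = 0 := by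
    intro t x y
    have h1 : deriv (fun a => u1 t a y) x
        = -(fderiv ℝ (fun q => fderiv ℝ F q (0, 0, 1)) (t, x, y) (0, 1, 0)) := by
      have := ((pdx (hG (0, 0, 1)) t x y).neg).deriv
      rw [← this]
      congr 1
      funext a
      exact hU1 t a y
    have h2 : deriv (fun b => u2 t x b) y
        = fderiv ℝ (fun q => fderiv ℝ F q (0, 1, 0)) (t, x, y) (0, 0, 1) := by
      have := (pdy (hG (0, 1, 0)) t x y).deriv
      rw [← this]
      congr 1
      funext b
      exact hU2 t x b
    rw [h1, h2, key hf (t, x, y) (0, 0, 1) (0, 1, 0)]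
    ring
  refine ⟨?_, ?_, hdiv⟩
  · intro t x y
    have h1 : deriv (fun s => u1 s x y) t
        = -(fderiv ℝ (fun q => fderiv ℝ F q (0, 0, 1)) (t, x, y) (1, 0, 0)) := by
      have := ((pdt (hG (0, 0, 1)) t x y).neg).deriv
      rw [← this]
      congr 1
      funext s
      exact hU1 s x y
    have h2 : deriv (fun b => b2 x b * u1 t x b - b1 x b * u2 t x b) y
        = -(fderiv ℝ (fun q => fderiv ℝ F q (1, 0, 0)) (t, x, y) (0, 0, 1)) := by
      have := ((pdy (hG (1, 0, 0)) t x y).neg).deriv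
      rw [← this]
      congr 1
      funext b
      rw [hu1, hu2, hfy, hfx, Pi.neg_apply, ← hft, htransport, hfx, hfy]
      ring
    rw [h1, h2, hdiv t x y, key hf (t, x, y) (0, 0, 1) (1, 0, 0)]
    ring
  · intro t x y
    have h1 : deriv (fun s => u2 s x y) t
        = fderiv ℝ (fun q => fderiv ℝ F q (0, 1, 0)) (t, x, y) (1, 0, 0) := by
      have := (pdt (hG (0, 1, 0)) t x y).deriv
      rw [← this]
      congr 1
      funext s
      exact hU2 s x y
    have h2 : deriv (fun a => b2 a y * u1 t a y - b1 a y * u2 t a y) x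
        = -(fderiv ℝ (fun q => fderiv ℝ F q (1, 0, 0)) (t, x, y) (0, 1, 0)) := by
      have := ((pdx (hG (1, 0, 0)) t x y).neg).deriv
      rw [← this]
      congr 1
      funext a
      rw [hu1, hu2, hfy, hfx, Pi.neg_apply, ← hft, htransport, hfx, hfy]
      ring
    rw [h1, h2, hdiv t x y, key hf (t, x, y) (0, 1, 0) (1, 0, 0)]
    ring
end
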